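/- arXiv:0807.3816 — 2 statements merged into one kernel-verified Lean document; each statement's English description precedes it below -/
import Mathlib

section
/- Let M be a discrete skip free process such that T_1(M) < ∞ almost surely and such that Θ^a(M) ≐ M for a = 0 and a = 1. Then lim_{n→∞} [M]_n = +∞ almost surely. -/
open MeasureTheory ProbabilityTheory Filter Finset
open scoped ENNReal NNReal

noncomputable section

/-- The quadratic variation `[s]_n` of a discrete path `s`. -/
def qv (s : ℕ → ℤ) (n : ℕ) : ℕ :=
  ∑ k ∈ Finset.range n, (s (k + 1) - s k).natAbs ^ 2

/-- Reflection of a discrete path at level `a`: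
`Θ^a(s)_n = ∑_{k=1}^n (1_{k ≤ T_a(s)} - 1_{k > T_a(s)}) (s_k - s_{k-1})`,
where `k ≤ T_a(s)` iff `s_j ≠ a` for every `j < k`. -/
def reflect (a : ℤ) (s : ℕ → ℤ) : ℕ → ℤ := fun n =>
  ∑ k ∈ Finset.range n, if ∀ j ≤ k, s j ≠ a then s (k + 1) - s k else s k - s (k + 1)

/-- A (deterministic) skip free path: starts at `0` and has increments in `{-1, 0, 1}`. -/
def SkipFreePath (s : ℕ → ℤ) : Prop :=
  s 0 = 0 ∧ ∀ n, s (n + 1) - s n = 1 ∨ s (n + 1) - s n = 0 ∨ s (n + 1) - s n = -1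

/-- The uniform law on `{-1, +1} ⊆ ℤ`. -/
def bern : Measure ℤ :=
  (2 : ℝ≥0∞)⁻¹ • Measure.dirac (1 : ℤ) + (2 : ℝ≥0∞)⁻¹ • Measure.dirac (-1 : ℤ)

/-- `S` is a symmetric Bernoulli random walk: `S_0 = 0` a.s. and the increments are
i.i.d. uniform on `{-1, +1}`. -/
def IsBernoulliRW {Ω : Type*} [MeasurableSpace Ω] (P : Measure Ω) (S : ℕ → Ω → ℤ) : Prop :=
  (∀ᵐ ω ∂P, S 0 ω = 0) ∧
    iIndepFun (fun n ω => S (n + 1) ω - S n ω) P ∧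
    ∀ n, Measure.map (fun ω => S (n + 1) ω - S n ω) P = bern

/-- `M` is a discrete Ocone local martingale: it is equal in law to a symmetric Bernoulli
random walk time changed by an independent nondecreasing `ℕ`-valued process with
increments in `{0, 1}`. -/
def IsDiscreteOcone {Ω : Type*} [MeasurableSpace Ω] (P : Measure Ω) (M : ℕ → Ω → ℤ) : Prop :=
  ∃ (Ω' : Type) (_ : MeasurableSpace Ω') (P' : Measure Ω') (S : ℕ → Ω' → ℤ) (A : ℕ → Ω' → ℕ),
    IsProbabilityMeasure P' ∧ IsBernoulliRW P' S ∧
    (∀ ω, A 0 ω = 0) ∧ (∀ ω n, A (n + 1) ω = A n ω ∨ A (n + 1) ω = A n ω + 1) ∧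
    IndepFun (fun ω => (S · ω)) (fun ω => (A · ω)) P' ∧
    Measure.map (fun ω => (fun n => M n ω)) P
      = Measure.map (fun ω => (fun n => S (A n ω) ω)) P'

/-- The successive times at which the quadratic variation of `s` increases:
`τ_0 = 0` and `τ_{n+1} = inf {k > τ_n : [s]_k = n + 1}`, with `inf ∅ = τ_n`. -/
def tauP (s : ℕ → ℤ) : ℕ → ℕ
  | 0 => 0
  | n + 1 => max (tauP s n) (sInf {k | tauP s n < k ∧ qv s k = n + 1})

/-- The time-changed path `S^s = (s_{τ_n})_n`. -/
def SM (s : ℕ → ℤ) : ℕ → ℤ := fun n => s (tauP s n)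

/- Let `μ` be the law of `M` on path space and `A_v` the event that the path is
eventually constant equal to `v`; off `⋃ v, A_v` every path moves infinitely often, and each move
adds at least one to `[M]`. Reflecting a path from `0` at a level `a` it reaches maps `A_v` into
`A_{2a - v}`, so reflecting at `1` (reached a.s.) and then at `0` gives
`μ A_v ≤ μ A_{2 - v} ≤ μ A_{v - 2}`. Hence the pairwise disjoint events `A_{v - 2k}`, `k ∈ ℕ`,
all have probability at least `μ A_v`, which forces `μ A_v = 0`. -/

lemma qv_succ (s : ℕ → ℤ) (n : ℕ) :
    qv s (n + 1) = qv s n + (s (n + 1) - s n).natAbs ^ 2 :=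
  Finset.sum_range_succ _ n

lemma natAbs_sub_add_qv_le (s : ℕ → ℤ) {n m : ℕ} (hnm : n ≤ m) :
    (s m - s n).natAbs + qv s n ≤ qv s m := by
  induction m, hnm using Nat.le_induction with
  | base => simp
  | succ m _ ih =>
    have htri : (s (m + 1) - s n).natAbs ≤ (s m - s n).natAbs + (s (m + 1) - s m).natAbs := by
      simpa using Int.natAbs_add_le (s m - s n) (s (m + 1) - s m)
    have hsq := Nat.le_self_pow two_ne_zero (s (m + 1) - s m).natAbs
    rw [qv_succ]
    omega

def absorbedAt (v : ℤ) : Set (ℕ → ℤ) := {s | ∀ᶠ n in atTop, s n = v}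

lemma tendsto_qv_atTop {s : ℕ → ℤ} (hs : ∀ v, s ∉ absorbedAt v) :
    Tendsto (qv s) atTop atTop := by
  refine tendsto_atTop_atTop_of_monotone
    (fun n m hnm => le_of_add_le_right (natAbs_sub_add_qv_le s hnm)) fun b => ?_
  induction b with
  | zero => exact ⟨0, Nat.zero_le _⟩
  | succ b ih =>
    obtain ⟨n, hn⟩ := ih
    obtain ⟨m, hnm, hm⟩ := frequently_atTop.mp (not_eventually.mp (hs (s n))) n
    have hmove : 0 < (s m - s n).natAbs := Int.natAbs_pos.mpr (sub_ne_zero.mpr hm)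
    exact ⟨m, by have := natAbs_sub_add_qv_le s hnm; omega⟩

lemma disjoint_absorbedAt {v w : ℤ} (hvw : v ≠ w) : Disjoint (absorbedAt v) (absorbedAt w) :=
  Set.disjoint_left.mpr fun _ hv hw => hvw ((hv.and hw).exists.elim fun _ h => h.1.symm.trans h.2)

lemma measurableSet_absorbedAt (v : ℤ) : MeasurableSet (absorbedAt v) := by
  have : absorbedAt v = atTop.liminf fun n => {s : ℕ → ℤ | s n = v} := by
    ext s
    simp [absorbedAt, mem_liminf_iff_eventually_mem]
  exact this ▸ MeasurableSet.measurableSet_liminf fun n =>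
    measurableSet_eq_fun (measurable_pi_apply n) measurable_const

lemma measurable_reflect (a : ℤ) : Measurable (reflect a) := by
  refine measurable_pi_lambda _ fun n => Finset.measurable_sum _ fun k _ => ?_
  refine Measurable.ite ?_ (by fun_prop) (by fun_prop)
  simp only [Set.ofPred_forall]
  exact .iInter fun j => .iInter fun _ =>
    (measurableSet_singleton a).compl.preimage (measurable_pi_apply j)

lemma reflect_succ (a : ℤ) (s : ℕ → ℤ) (n : ℕ) :
    reflect a s (n + 1) = reflect a s n
      + (if ∀ j ≤ n, s j ≠ a then s (n + 1) - s n else s n - s (n + 1)) :=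
  Finset.sum_range_succ _ n

lemma reflect_of_forall_lt_ne {a : ℤ} {s : ℕ → ℤ} {n : ℕ} (hn : ∀ j < n, s j ≠ a) :
    reflect a s n = s n - s 0 := by
  rw [reflect, Finset.sum_congr rfl fun k hk => if_pos fun j hj =>
    hn j (hj.trans_lt (Finset.mem_range.mp hk)), Finset.sum_range_sub s n]

lemma reflect_of_hitting_le {a : ℤ} {s : ℕ → ℤ} {T : ℕ} (hT : s T = a)
    (hmin : ∀ j < T, s j ≠ a) {n : ℕ} (hn : T ≤ n) :
    reflect a s n = 2 * a - s 0 - s n := by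
  induction n, hn using Nat.le_induction with
  | base => rw [reflect_of_forall_lt_ne hmin, hT]; ring
  | succ n hn ih =>
    rw [reflect_succ, ih, if_neg fun h => h T hn hT]
    ring

lemma reflect_mem_absorbedAt {a v : ℤ} {s : ℕ → ℤ} (hs0 : s 0 = 0) (hhit : ∃ k, s k = a)
    (hv : s ∈ absorbedAt v) : reflect a s ∈ absorbedAt (2 * a - v) := by
  classical
  filter_upwards [hv, eventually_ge_atTop (Nat.find hhit)] with n hn hTn
  rw [reflect_of_hitting_le (Nat.find_spec hhit) (fun j => Nat.find_min hhit) hTn, hs0, hn]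
  ring

lemma MeasureTheory.MeasurePreserving.measure_le_of_ae_mem_imp {α β : Type*} [MeasurableSpace α]
    [MeasurableSpace β] {μ : Measure α} {ν : Measure β} {f : α → β}
    (hf : MeasurePreserving f μ ν) {A : Set α} {B : Set β} (hB : MeasurableSet B)
    (h : ∀ᵐ x ∂μ, x ∈ A → f x ∈ B) : μ A ≤ ν B :=
  calc μ A ≤ μ (f ⁻¹' B) := measure_mono_ae h
    _ = ν B := hf.measure_preimage hB.nullMeasurableSet

lemma eq_zero_of_le_measure_of_pairwise_disjoint {α : Type*} [MeasurableSpace α]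
    {μ : Measure α} [IsFiniteMeasure μ] {A : ℕ → Set α} (hA : ∀ k, MeasurableSet (A k))
    (hd : Pairwise (Function.onFun Disjoint A)) {c : ℝ≥0∞} (hc : ∀ k, c ≤ μ (A k)) :
    c = 0 := by
  by_contra hc0
  have : ∞ ≤ μ (⋃ k, A k) :=
    calc ∞ = ∑' _ : ℕ, c := (ENNReal.tsum_const_eq_top_of_ne_zero hc0).symm
      _ ≤ ∑' k, μ (A k) := ENNReal.tsum_le_tsum hc
      _ = μ (⋃ k, A k) := (measure_iUnion hd hA).symm
  exact measure_ne_top μ _ (top_le_iff.mp this)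

theorem measure_absorbedAt_eq_zero {μ : Measure (ℕ → ℤ)} [IsFiniteMeasure μ]
    (h0 : ∀ᵐ s ∂μ, s 0 = 0) (h1 : ∀ᵐ s ∂μ, ∃ k, s k = 1)
    (hrefl0 : MeasurePreserving (reflect 0) μ μ) (hrefl1 : MeasurePreserving (reflect 1) μ μ)
    (v : ℤ) : μ (absorbedAt v) = 0 := by
  have hstep (w : ℤ) : μ (absorbedAt w) ≤ μ (absorbedAt (w - 2)) :=
    calc μ (absorbedAt w) ≤ μ (absorbedAt (2 * 1 - w)) :=
          hrefl1.measure_le_of_ae_mem_imp (measurableSet_absorbedAt _) <| by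
            filter_upwards [h0, h1] with s hs0 hs1 using reflect_mem_absorbedAt hs0 hs1
      _ ≤ μ (absorbedAt (2 * 0 - (2 * 1 - w))) :=
          hrefl0.measure_le_of_ae_mem_imp (measurableSet_absorbedAt _) <| by
            filter_upwards [h0] with s hs0 using reflect_mem_absorbedAt hs0 ⟨0, hs0⟩
      _ = μ (absorbedAt (w - 2)) := by ring_nf
  refine eq_zero_of_le_measure_of_pairwise_disjoint (μ := μ)
    (A := fun k : ℕ => absorbedAt (v - 2 * k)) (fun k => measurableSet_absorbedAt _)
    (fun k l hkl => disjoint_absorbedAt (by omega)) fun k => ?_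
  induction k with
  | zero => simp
  | succ k ih => exact ih.trans ((hstep _).trans_eq (by push_cast; ring_nf))

/-- **Lemma 2.** Any skip free process `M` such that `T_1(M) < ∞` a.s. and
`Θ^a(M) ≐ M` for `a = 0` and `a = 1` satisfies `[M]_n → +∞` a.s. -/
theorem skip_free_reflection_qv_tendsto_atTop
    {Ω : Type*} [MeasurableSpace Ω] (P : Measure Ω) [IsProbabilityMeasure P]
    (M : ℕ → Ω → ℤ) (hmeas : ∀ n, Measurable (M n))
    (hskip : ∀ ω, SkipFreePath (fun n => M n ω))
    (hT1 : ∀ᵐ ω ∂P, ∃ k, M k ω = 1)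
    (hrefl : ∀ a : ℤ, a = 0 ∨ a = 1 →
      Measure.map (fun ω => reflect a (fun n => M n ω)) P
        = Measure.map (fun ω => (fun n => M n ω)) P) :
    ∀ᵐ ω ∂P, Tendsto (fun n => qv (fun k => M k ω) n) atTop atTop := by
  set X : Ω → ℕ → ℤ := fun ω n => M n ω
  have hX : Measurable X := measurable_pi_lambda _ hmeas
  have hpres (a : ℤ) (ha : a = 0 ∨ a = 1) : MeasurePreserving (reflect a) (P.map X) (P.map X) :=
    ⟨measurable_reflect a, by rw [Measure.map_map (measurable_reflect a) hX]; exact hrefl a ha⟩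
  have h0 : ∀ᵐ s ∂P.map X, s 0 = 0 :=
    (ae_map_iff hX.aemeasurable (measurableSet_eq_fun (measurable_pi_apply 0) measurable_const)).mpr
      (ae_of_all _ fun ω => (hskip ω).1)
  have h1 : ∀ᵐ s ∂P.map X, ∃ k, s k = 1 :=
    (ae_map_iff hX.aemeasurable (by measurability)).mpr hT1
  have hmoves : ∀ᵐ s ∂P.map X, ∀ v, s ∉ absorbedAt v := ae_all_iff.mpr fun v =>
    measure_eq_zero_iff_ae_notMem.mp
      (measure_absorbedAt_eq_zero h0 h1 (hpres 0 (.inl rfl)) (hpres 1 (.inr rfl)) v)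
  filter_upwards [ae_of_ae_map hX.aemeasurable hmoves] with ω hω using tendsto_qv_atTop hω
end
end

section
/- Let (ε_k)_{k≥0} be i.i.d. symmetric Bernoulli random variables (P(ε_k = ±1) = 1/2) and define the skip free process M by M_0 = 0 and M_n = Σ_{j=1}^n ε_{⌊log₂ j⌋} for n ≥ 1 (so that for every k ≥ 0 all the increments M_n − M_{n−1} with n ∈ [2^k, 2^{k+1} − 1] equal ε_k). Then: (1) Θ^0(M) ≐ M; (2) T_1(M) < ∞ almost surely; (3) Θ^1(M) ≐ M; (4) M is not a discrete Ocone local martingale. -/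
open MeasureTheory ProbabilityTheory Filter Finset
open scoped ENNReal NNReal

noncomputable section

/-!
Write `M = dyadicPath ε`. As `M` starts at `0`, `Θ⁰(M) = -M = dyadicPath (-ε)`. A path with
steps `±1` first reaches `1` at the end of the dyadic block of the first `k` with `ε_k = 1`, so
`Θ¹(M) = dyadicPath ε'`, where `ε'` flips the signs of all `ε_k` after the first `+1`. Both
`ε ↦ -ε` and `ε ↦ ε'` are causal involutions that only change signs, and such maps preserve the
law of an i.i.d. symmetric sequence, as one checks on prefix cylinders.

Almost surely `M_3 - M_2 = M_2 - M_1 = ε_1 ≠ 0 ≠ M_1`. If `M` had the law of `S_A`, then on this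
event the time change would be the identity up to time `3`, forcing the independent steps
`S_2 - S_1` and `S_3 - S_2` to agree, which happens only with probability `1/2`.
-/

instance : IsProbabilityMeasure bern :=
  ⟨by simp [bern, ENNReal.inv_two_add_inv_two]⟩

instance : bern.IsNegInvariant := by
  constructor
  rw [Measure.neg, bern, Measure.map_add _ _ measurable_neg, Measure.map_smul, Measure.map_smul,
    Measure.map_dirac' measurable_neg, Measure.map_dirac' measurable_neg, neg_neg, add_comm]

lemma ae_bern : ∀ᵐ t ∂bern, t = 1 ∨ t = -1 := by
  simp [bern, ae_add_measure_iff]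

lemma bern_prod_bern_diagonal : (bern.prod bern) (Set.diagonal ℤ) = 2⁻¹ := by
  simp [bern, Measure.prod_add, Measure.add_prod, Measure.prod_smul_left, Measure.prod_smul_right,
    Measure.dirac_prod_dirac, measurableSet_diagonal]
  rw [← two_mul, ← mul_assoc, ENNReal.mul_inv_cancel two_ne_zero ENNReal.ofNat_ne_top, one_mul]

lemma measure_setOf_eq_of_indepFun_bern {Ω : Type*} [MeasurableSpace Ω] {P : Measure Ω}
    [IsProbabilityMeasure P] {X Y : Ω → ℤ} (hXY : IndepFun X Y P) (hX : P.map X = bern)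
    (hY : P.map Y = bern) : P {ω | X ω = Y ω} = 2⁻¹ := by
  have hXm : AEMeasurable X P := .of_map_ne_zero (hX ▸ IsProbabilityMeasure.ne_zero bern)
  have hYm : AEMeasurable Y P := .of_map_ne_zero (hY ▸ IsProbabilityMeasure.ne_zero bern)
  have hjoint := (indepFun_iff_map_prod_eq_prod_map_map hXm hYm).1 hXY
  rw [hX, hY] at hjoint
  rw [← bern_prod_bern_diagonal, ← hjoint,
    Measure.map_apply_of_aemeasurable (hXm.prodMk hYm) measurableSet_diagonal]
  rfl

section PrefixCylinder

variable {α : Type*}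

def prefixCylinder (n : ℕ) (c : ℕ → α) : Set (ℕ → α) :=
  (Finset.range n : Set ℕ).pi fun i => {c i}

lemma mem_prefixCylinder {n : ℕ} {c x : ℕ → α} :
    x ∈ prefixCylinder n c ↔ ∀ i < n, x i = c i := by
  simp [prefixCylinder]

lemma isPiSystem_prefixCylinder :
    IsPiSystem (Set.range (Function.uncurry (prefixCylinder (α := α)))) := by
  rintro _ ⟨⟨n, c⟩, rfl⟩ _ ⟨⟨m, d⟩, rfl⟩ ⟨y, hyc, hyd⟩
  rw [Function.uncurry_apply_pair, mem_prefixCylinder] at hyc hyd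
  wlog hnm : n ≤ m generalizing n m c d
  · rw [Set.inter_comm]; exact this m d n c hyd hyc (by omega)
  refine ⟨(m, d), (Set.inter_eq_right.2 fun x hx => ?_).symm⟩
  rw [Function.uncurry_apply_pair, mem_prefixCylinder] at hx ⊢
  intro i hi
  rw [hx i (by omega), ← hyd i (by omega), hyc i hi]

variable [MeasurableSpace α] [MeasurableSingletonClass α]

lemma measurableSet_prefixCylinder (n : ℕ) (c : ℕ → α) : MeasurableSet (prefixCylinder n c) :=
  MeasurableSet.pi (Set.to_countable _) fun i _ => measurableSet_singleton (c i)

lemma ae_exists_eq_of_infinitePi {ν : Measure α} [IsProbabilityMeasure ν] {a : α}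
    (ha : ν {a} ≠ 0) : ∀ᵐ x ∂(Measure.infinitePi fun _ : ℕ => ν), ∃ k, x k = a := by
  rw [ae_iff]
  have hlt : ν {a}ᶜ < 1 := by
    rw [prob_compl_eq_one_sub (measurableSet_singleton a)]
    exact ENNReal.sub_lt_self ENNReal.one_ne_top one_ne_zero ha
  refine le_antisymm (ge_of_tendsto' (ENNReal.tendsto_pow_atTop_nhds_zero_of_lt_one hlt)
    fun n => ?_) zero_le
  calc _ ≤ (Measure.infinitePi fun _ => ν) ((Finset.range n : Set ℕ).pi fun _ => {a}ᶜ) :=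
        measure_mono fun x (hx : ¬∃ k, x k = a) i _ (hi : x i = a) => hx ⟨i, hi⟩
    _ = ν {a}ᶜ ^ n := by
        rw [Measure.infinitePi_pi _ fun _ _ => (measurableSet_singleton a).compl,
          Finset.prod_const, Finset.card_range]

variable [Countable α]

lemma generateFrom_prefixCylinder :
    MeasurableSpace.generateFrom (Set.range (Function.uncurry (prefixCylinder (α := α)))) =
      MeasurableSpace.pi := by
  refine le_antisymm (MeasurableSpace.generateFrom_le ?_) (iSup_le fun i => ?_)
  · rintro _ ⟨⟨n, c⟩, rfl⟩
    exact measurableSet_prefixCylinder n c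
  refine MeasurableSpace.comap_le_iff_le_map.2 fun s _ => ?_
  rw [MeasurableSpace.map_def, ← Set.biUnion_of_singleton s, Set.preimage_iUnion₂]
  refine MeasurableSet.biUnion (Set.to_countable s) fun z _ => ?_
  have : (fun x : ℕ → α => x i) ⁻¹' {z} = ⋃ v : Fin i → α,
      prefixCylinder (i + 1) fun j => if h : j < i then v ⟨j, h⟩ else z := by
    ext x
    simp only [Set.mem_preimage, Set.mem_singleton_iff, Set.mem_iUnion, mem_prefixCylinder]
    refine ⟨fun hx => ⟨fun j => x j, fun j hj => ?_⟩,
      fun ⟨v, hv⟩ => by simpa using hv i (by omega)⟩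
    rcases Nat.lt_succ_iff_lt_or_eq.1 hj with hj | rfl <;> simp [*]
  rw [this]
  exact MeasurableSet.iUnion fun v => MeasurableSpace.measurableSet_generateFrom ⟨(_, _), rfl⟩

lemma MeasureTheory.Measure.ext_of_prefixCylinder {μ ν : Measure (ℕ → α)}
    [IsProbabilityMeasure μ] [IsProbabilityMeasure ν]
    (h : ∀ n c, μ (prefixCylinder n c) = ν (prefixCylinder n c)) : μ = ν :=
  ext_of_generate_finite _ generateFrom_prefixCylinder.symm isPiSystem_prefixCylinder
    (by rintro _ ⟨⟨n, c⟩, rfl⟩; exact h n c) (by simp)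

end PrefixCylinder

section Causal

variable {α : Type*}

def IsCausal (G : (ℕ → α) → ℕ → α) : Prop :=
  ∀ ⦃x y : ℕ → α⦄ ⦃n : ℕ⦄, (∀ i ≤ n, x i = y i) → G x n = G y n

lemma IsCausal.preimage_prefixCylinder {G : (ℕ → α) → ℕ → α} (hG : IsCausal G)
    (hinv : Function.Involutive G) (n : ℕ) (c : ℕ → α) :
    G ⁻¹' prefixCylinder n c = prefixCylinder n (G c) := by
  have hmaps : ∀ x y, x ∈ prefixCylinder n y → G x ∈ prefixCylinder n (G y) := by
    simp only [mem_prefixCylinder]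
    exact fun x y h i hi => hG fun j hj => h j (by omega)
  ext x
  exact ⟨fun hx => hinv x ▸ hmaps _ _ hx, fun hx => hinv c ▸ hmaps _ _ hx⟩

variable [MeasurableSpace α] [Countable α] [MeasurableSingletonClass α] [InvolutiveNeg α]
  [MeasurableNeg α]

theorem measurePreserving_infinitePi_of_isCausal {ν : Measure α} [IsProbabilityMeasure ν]
    [ν.IsNegInvariant] {G : (ℕ → α) → ℕ → α} (hGm : Measurable G) (hG : IsCausal G)
    (hinv : Function.Involutive G) (hsign : ∀ x i, G x i = x i ∨ G x i = -x i) :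
    MeasurePreserving G (Measure.infinitePi fun _ => ν) (Measure.infinitePi fun _ => ν) := by
  have : IsProbabilityMeasure ((Measure.infinitePi fun _ => ν).map G) :=
    Measure.isProbabilityMeasure_map hGm.aemeasurable
  refine ⟨hGm, Measure.ext_of_prefixCylinder fun n c => ?_⟩
  have hpi : ∀ d : ℕ → α, (Measure.infinitePi fun _ => ν) (prefixCylinder n d) =
      ∏ i ∈ Finset.range n, ν {d i} :=
    fun d => Measure.infinitePi_pi _ fun i _ => measurableSet_singleton (d i)
  rw [Measure.map_apply hGm (measurableSet_prefixCylinder n c), hG.preimage_prefixCylinder hinv,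
    hpi, hpi]
  refine Finset.prod_congr rfl fun i _ => ?_
  rcases hsign c i with h | h <;> rw [h]
  rw [← Set.neg_singleton, Measure.measure_neg]

end Causal

def flipAfterOne (x : ℕ → ℤ) (i : ℕ) : ℤ :=
  if ∃ j < i, x j = 1 then -x i else x i

lemma isCausal_flipAfterOne : IsCausal flipAfterOne := by
  intro x y n h
  have hpre : (∃ j < n, x j = 1) ↔ ∃ j < n, y j = 1 := by
    refine exists_congr fun j => and_congr_right fun hj => ?_
    rw [h j hj.le]
  simp only [flipAfterOne, hpre, h n le_rfl]

lemma exists_flipAfterOne_eq_one_iff (x : ℕ → ℤ) (i : ℕ) :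
    (∃ j < i, flipAfterOne x j = 1) ↔ ∃ j < i, x j = 1 := by
  constructor
  · rintro ⟨j, hj, hj1⟩
    unfold flipAfterOne at hj1
    split_ifs at hj1 with hc
    · obtain ⟨m, hm, hm1⟩ := hc
      exact ⟨m, hm.trans hj, hm1⟩
    · exact ⟨j, hj, hj1⟩
  · rintro ⟨j, hj, hj1⟩
    classical
    have hex : ∃ m, x m = 1 := ⟨j, hj1⟩
    -- the first `1` of `x` is left unchanged
    refine ⟨Nat.find hex, (Nat.find_le hj1).trans_lt hj, ?_⟩
    rw [flipAfterOne, if_neg fun ⟨m, hm, hm1⟩ => Nat.find_min hex hm hm1]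
    exact Nat.find_spec hex

lemma flipAfterOne_involutive : Function.Involutive flipAfterOne := by
  intro x
  funext i
  rw [flipAfterOne, if_congr (exists_flipAfterOne_eq_one_iff x i) rfl rfl, flipAfterOne]
  split_ifs <;> simp

lemma measurable_flipAfterOne : Measurable flipAfterOne := by
  refine measurable_pi_lambda _ fun i => Measurable.ite ?_ (measurable_pi_apply i).neg
    (measurable_pi_apply i)
  have : {x : ℕ → ℤ | ∃ j < i, x j = 1} =
      ⋃ j ∈ Finset.range i, (fun x : ℕ → ℤ => x j) ⁻¹' {1} := by
    ext x; simp
  rw [this]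
  exact MeasurableSet.biUnion (Set.to_countable _)
    fun j _ => measurable_pi_apply j (measurableSet_singleton _)

lemma flipAfterOne_eq_or_eq_neg (x : ℕ → ℤ) (i : ℕ) :
    flipAfterOne x i = x i ∨ flipAfterOne x i = -x i := by
  unfold flipAfterOne; split_ifs <;> simp

def dyadicPath (x : ℕ → ℤ) (n : ℕ) : ℤ :=
  ∑ j ∈ Finset.Icc 1 n, x (Nat.log 2 j)

lemma measurable_dyadicPath : Measurable dyadicPath :=
  measurable_pi_lambda _ fun _ => Finset.measurable_sum _ fun _ _ => measurable_pi_apply _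

@[simp] lemma dyadicPath_zero (x : ℕ → ℤ) : dyadicPath x 0 = 0 := by
  simp [dyadicPath]

lemma dyadicPath_succ (x : ℕ → ℤ) (n : ℕ) :
    dyadicPath x (n + 1) = dyadicPath x n + x (Nat.log 2 (n + 1)) :=
  Finset.sum_Icc_succ_top (Nat.le_add_left 1 n) _

lemma dyadicPath_neg (x : ℕ → ℤ) : dyadicPath (-x) = -dyadicPath x := by
  funext n; simp [dyadicPath]

lemma dyadicPath_eq_sum_range (x : ℕ → ℤ) (n : ℕ) :
    dyadicPath x n = ∑ k ∈ Finset.range n, x (Nat.log 2 (k + 1)) := by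
  induction n with
  | zero => simp
  | succ n ih => rw [dyadicPath_succ, ih, Finset.sum_range_succ]

lemma dyadicPath_two_pow_sub_one_add (x : ℕ → ℤ) (K : ℕ) {t : ℕ} (ht : t ≤ 2 ^ K) :
    dyadicPath x (2 ^ K - 1 + t) = dyadicPath x (2 ^ K - 1) + t * x K := by
  induction t with
  | zero => simp
  | succ t ih =>
    have hpos := Nat.one_le_two_pow (n := K)
    have hlog : Nat.log 2 (2 ^ K - 1 + t + 1) = K :=
      Nat.log_eq_of_pow_le_of_lt_pow (by omega) (by rw [pow_succ]; omega)
    rw [← add_assoc, dyadicPath_succ, ih (by omega), hlog]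
    push_cast; ring

lemma dyadicPath_two_pow_sub_one (x : ℕ → ℤ) {K : ℕ} (hx : ∀ m < K, x m = -1) :
    dyadicPath x (2 ^ K - 1) = 1 - 2 ^ K := by
  induction K with
  | zero => simp
  | succ K ih =>
    have h := dyadicPath_two_pow_sub_one_add x K le_rfl
    rw [show 2 ^ K - 1 + 2 ^ K = 2 ^ (K + 1) - 1 by rw [pow_succ]; omega] at h
    rw [h, ih fun m hm => hx m (by omega), hx K (by omega)]
    push_cast; ring

lemma dyadicPath_two_pow_succ_sub_one {x : ℕ → ℤ} {K : ℕ} (hx : ∀ m < K, x m = -1)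
    (hK : x K = 1) : dyadicPath x (2 ^ (K + 1) - 1) = 1 := by
  have h := dyadicPath_two_pow_sub_one_add x K le_rfl
  rw [show 2 ^ K - 1 + 2 ^ K = 2 ^ (K + 1) - 1 by rw [pow_succ]; omega] at h
  rw [h, dyadicPath_two_pow_sub_one x hx, hK]
  push_cast; ring

lemma dyadicPath_nonpos {x : ℕ → ℤ} {j : ℕ} (hx : ∀ m < Nat.log 2 (j + 1), x m = -1)
    (hle : x (Nat.log 2 (j + 1)) ≤ 1) : dyadicPath x j ≤ 0 := by
  set K := Nat.log 2 (j + 1)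
  have hlow : 2 ^ K ≤ j + 1 := Nat.pow_log_le_self 2 (Nat.succ_ne_zero j)
  have hhigh : j + 1 < 2 ^ (K + 1) := Nat.lt_pow_succ_log_self one_lt_two _
  rw [pow_succ] at hhigh
  have h := dyadicPath_two_pow_sub_one_add x K (t := j + 1 - 2 ^ K) (by omega)
  rw [show 2 ^ K - 1 + (j + 1 - 2 ^ K) = j by omega, dyadicPath_two_pow_sub_one x hx] at h
  rw [h]
  have ht : ((j + 1 - 2 ^ K : ℕ) : ℤ) < 2 ^ K := by
    have : j + 1 - 2 ^ K < 2 ^ K := by omega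
    exact_mod_cast this
  nlinarith [show (0 : ℤ) ≤ ((j + 1 - 2 ^ K : ℕ) : ℤ) from Nat.cast_nonneg _]

lemma exists_dyadicPath_eq_one_iff {x : ℕ → ℤ} (hx : ∀ k, x k = 1 ∨ x k = -1) (k : ℕ) :
    (∃ j ≤ k, dyadicPath x j = 1) ↔ ∃ m < Nat.log 2 (k + 1), x m = 1 := by
  constructor
  · rintro ⟨j, hj, hj1⟩
    by_contra! hno
    have hlog : Nat.log 2 (j + 1) ≤ Nat.log 2 (k + 1) := Nat.log_mono_right (by omega)
    have := dyadicPath_nonpos (x := x) (j := j)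
      (fun m hm => (hx m).resolve_left (hno m (by omega)))
      (by rcases hx (Nat.log 2 (j + 1)) with h | h <;> omega)
    omega
  · rintro ⟨m, hm, hm1⟩
    classical
    have hex : ∃ m, x m = 1 := ⟨m, hm1⟩
    set K := Nat.find hex
    refine ⟨2 ^ (K + 1) - 1, ?_, dyadicPath_two_pow_succ_sub_one
      (fun m hm => (hx m).resolve_left (Nat.find_min hex hm)) (Nat.find_spec hex)⟩
    have : 2 ^ (K + 1) ≤ k + 1 :=
      (Nat.pow_le_pow_right two_pos (Nat.find_le hm1 |>.trans_lt hm)).trans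
        (Nat.pow_log_le_self 2 (Nat.succ_ne_zero k))
    omega

lemma exists_dyadicPath_eq_one {x : ℕ → ℤ} (hx : ∀ k, x k = 1 ∨ x k = -1) (h : ∃ m, x m = 1) :
    ∃ j, dyadicPath x j = 1 := by
  obtain ⟨m, hm⟩ := h
  obtain ⟨j, -, hj⟩ := (exists_dyadicPath_eq_one_iff hx (2 ^ (m + 1) - 1)).2
    ⟨m, by rw [Nat.sub_add_cancel Nat.one_le_two_pow, Nat.log_pow one_lt_two]; omega, hm⟩
  exact ⟨j, hj⟩

lemma reflect_zero_of_eq_zero {s : ℕ → ℤ} (h0 : s 0 = 0) : reflect 0 s = -s := by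
  funext n
  have hhit : ∀ k, ¬∀ j ≤ k, s j ≠ 0 := fun k h => h 0 k.zero_le h0
  simp only [reflect, hhit, if_false, Finset.sum_range_sub', h0, zero_sub, Pi.neg_apply]

lemma reflect_one_dyadicPath {x : ℕ → ℤ} (hx : ∀ k, x k = 1 ∨ x k = -1) :
    reflect 1 (dyadicPath x) = dyadicPath (flipAfterOne x) := by
  funext n
  rw [reflect, dyadicPath_eq_sum_range]
  refine Finset.sum_congr rfl fun k _ => ?_
  have hnohit : (∀ j ≤ k, dyadicPath x j ≠ 1) ↔ ¬∃ m < Nat.log 2 (k + 1), x m = 1 := by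
    rw [← exists_dyadicPath_eq_one_iff hx k]; simp only [not_exists, not_and, ne_eq]
  simp only [dyadicPath_succ, add_sub_cancel_left, sub_add_cancel_left, hnohit, flipAfterOne]
  split_ifs <;> rfl

def secondStepRepeats : Set (ℕ → ℤ) :=
  {g | (∀ k < 3, g (k + 1) ≠ g k) ∧ g 3 - g 2 = g 2 - g 1}

lemma measurableSet_secondStepRepeats : MeasurableSet secondStepRepeats := by
  unfold secondStepRepeats
  measurability

lemma dyadicPath_mem_secondStepRepeats {x : ℕ → ℤ} (hx : ∀ k, x k = 1 ∨ x k = -1) :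
    dyadicPath x ∈ secondStepRepeats := by
  have h0 : x 0 ≠ 0 := by rcases hx 0 with h | h <;> simp [h]
  have h1 : x 1 ≠ 0 := by rcases hx 1 with h | h <;> simp [h]
  have hlog2 : Nat.log 2 2 = 1 := by decide
  have hlog3 : Nat.log 2 3 = 1 := by decide
  refine ⟨fun k hk => ?_, ?_⟩
  · interval_cases k <;> simp [dyadicPath_succ, hlog2, hlog3, h0, h1]
  · simp [dyadicPath_succ, hlog2, hlog3]

lemma eq_self_of_apply_succ_ne {A : ℕ → ℕ} {s : ℕ → ℤ} (h0 : A 0 = 0)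
    (hstep : ∀ n, A (n + 1) = A n ∨ A (n + 1) = A n + 1) {n : ℕ}
    (hne : ∀ k < n, s (A (k + 1)) ≠ s (A k)) : A n = n := by
  induction n with
  | zero => exact h0
  | succ n ih =>
    rcases hstep n with h | h
    · exact absurd (congrArg s h) (hne n n.lt_succ_self)
    · rw [h, ih fun k hk => hne k (hk.trans n.lt_succ_self)]

lemma not_isDiscreteOcone_of_ae_mem_secondStepRepeats {Ω : Type*} [MeasurableSpace Ω]
    {P : Measure Ω} [IsProbabilityMeasure P]
    {M : ℕ → Ω → ℤ} (hM : AEMeasurable (fun ω n => M n ω) P)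
    (hrep : ∀ᵐ ω ∂P, (fun n => M n ω) ∈ secondStepRepeats) : ¬IsDiscreteOcone P M := by
  rintro ⟨Ω', _, P', S, A, hP', ⟨-, hSindep, hSlaw⟩, hA0, hAstep, -, hlaw⟩
  have hE := measurableSet_secondStepRepeats
  have : IsProbabilityMeasure (P.map fun ω n => M n ω) := Measure.isProbabilityMeasure_map hM
  have hone : P.map (fun ω n => M n ω) secondStepRepeats = 1 := by
    rw [← measure_univ (μ := P.map fun ω n => M n ω)]
    exact (ae_mem_iff_measure_eq hE.nullMeasurableSet).1 ((ae_map_iff hM hE).2 hrep)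
  have hSA : AEMeasurable (fun ω n => S (A n ω) ω) P' :=
    .of_map_ne_zero (hlaw ▸ IsProbabilityMeasure.ne_zero _)
  have hsub : (fun ω n => S (A n ω) ω) ⁻¹' secondStepRepeats ⊆
      {ω | S 2 ω - S 1 ω = S 3 ω - S 2 ω} := by
    rintro ω ⟨hne, heq⟩
    have hA : ∀ n ≤ 3, A n ω = n := fun n hn =>
      eq_self_of_apply_succ_ne (A := (A · ω)) (s := (S · ω)) (hA0 ω) (hAstep ω)
        fun k hk => hne k (by omega)
    simp only [hA 1 (by omega), hA 2 (by omega), hA 3 le_rfl] at heq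
    exact heq.symm
  have hle := measure_mono hsub (μ := P')
  rw [← Measure.map_apply_of_aemeasurable hSA hE, ← hlaw, hone, measure_setOf_eq_of_indepFun_bern
    (hSindep.indepFun (by norm_num : (1 : ℕ) ≠ 2)) (hSlaw 1) (hSlaw 2)] at hle
  exact absurd hle (by norm_num)

lemma map_comp_comp_eq_of_measurePreserving {Ω β γ : Type*} [MeasurableSpace Ω]
    [MeasurableSpace β] [MeasurableSpace γ] {P : Measure Ω} {X : Ω → β} {G : β → β} {f : β → γ}
    (hX : Measurable X) (hG : MeasurePreserving G (P.map X) (P.map X)) (hf : Measurable f) :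
    P.map (fun ω => f (G (X ω))) = P.map fun ω => f (X ω) := by
  change P.map (f ∘ G ∘ X) = P.map (f ∘ X)
  rw [← Measure.map_map hf (hG.measurable.comp hX), ← Measure.map_map hG.measurable hX, hG.map_eq,
    Measure.map_map hf hX]

/-- **Counterexample 2.** Let `(ε_k)_{k ≥ 0}` be i.i.d. symmetric Bernoulli random
variables and let `M_n = ∑_{j=1}^n ε_{⌊log₂ j⌋}`, so that all the increments
`M_n - M_{n-1}` with `n ∈ [2^k, 2^{k+1} - 1]` equal `ε_k`. Then `Θ^0(M) ≐ M`,
`T_1(M) < ∞` a.s., `Θ^1(M) ≐ M`, but `M` is not a discrete Ocone local martingale. -/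
theorem counterexample_two
    {Ω : Type*} [MeasurableSpace Ω] (P : Measure Ω) [IsProbabilityMeasure P]
    (ε : ℕ → Ω → ℤ) (hmeas : ∀ k, Measurable (ε k))
    (hindep : iIndepFun ε P)
    (hlaw : ∀ k, Measure.map (ε k) P = bern)
    (M : ℕ → Ω → ℤ)
    (hM : ∀ ω n, M n ω = ∑ j ∈ Finset.Icc 1 n, ε (Nat.log 2 j) ω) :
    Measure.map (fun ω => reflect 0 (fun n => M n ω)) P
        = Measure.map (fun ω => (fun n => M n ω)) P ∧
      (∀ᵐ ω ∂P, ∃ k, M k ω = 1) ∧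
      Measure.map (fun ω => reflect 1 (fun n => M n ω)) P
        = Measure.map (fun ω => (fun n => M n ω)) P ∧
      ¬ IsDiscreteOcone P M := by
  have hX : Measurable fun ω i => ε i ω := measurable_pi_lambda _ hmeas
  have hlawX : P.map (fun ω i => ε i ω) = Measure.infinitePi fun _ => bern := by
    rw [hindep.map_fun_eq_infinitePi_map₀ hX.aemeasurable]
    simp_rw [hlaw]
  set X : Ω → ℕ → ℤ := fun ω i => ε i ω
  obtain rfl : M = fun n ω => dyadicPath (X ω) n := funext₂ fun n ω => hM ω n
  have hpm : ∀ᵐ ω ∂P, ∀ k, X ω k = 1 ∨ X ω k = -1 :=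
    ae_all_iff.2 fun k => ae_of_ae_map (hmeas k).aemeasurable (hlaw k ▸ ae_bern)
  refine ⟨?_, ?_, ?_, ?_⟩
  · simp_rw [reflect_zero_of_eq_zero (dyadicPath_zero _), ← dyadicPath_neg]
    refine map_comp_comp_eq_of_measurePreserving hX ?_ measurable_dyadicPath
    exact hlawX ▸ measurePreserving_infinitePi_of_isCausal measurable_neg
      (fun x y n h => by simp [h n le_rfl]) neg_involutive fun _ _ => Or.inr rfl
  · have hone : ∀ᵐ ω ∂P, ∃ k, X ω k = 1 := ae_of_ae_map hX.aemeasurable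
      (hlawX ▸ ae_exists_eq_of_infinitePi (ν := bern) (a := 1) (by simp [bern]))
    filter_upwards [hpm, hone] with ω hω hω1 using exists_dyadicPath_eq_one hω hω1
  · rw [Measure.map_congr (hpm.mono fun ω hω => reflect_one_dyadicPath hω)]
    refine map_comp_comp_eq_of_measurePreserving hX ?_ measurable_dyadicPath
    exact hlawX ▸ measurePreserving_infinitePi_of_isCausal measurable_flipAfterOne
      isCausal_flipAfterOne flipAfterOne_involutive flipAfterOne_eq_or_eq_neg
  · exact not_isDiscreteOcone_of_ae_mem_secondStepRepeats
      (measurable_dyadicPath.comp hX).aemeasurable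
      (hpm.mono fun ω hω => dyadicPath_mem_secondStepRepeats hω)
end
end
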